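/- arXiv:2211.11371 — 5 statements merged into one kernel-verified Lean document; each statement's English description precedes it below -/
import Mathlib

section
/- Let $p$ be an odd prime, $q$ a power of $p$, and $n$ a positive integer divisible by $p$. Then there exists an element $\beta \in \mathbb{F}_{q^n} \setminus \mathbb{F}_q$ such that $\beta^q + \beta^{q^{n-1}} - 2\beta = 0$. -/
/-!
Let `σ` be the `q`-power Frobenius of `F` and pick `θ` with `Tr_{F/F_q} θ = 1` (the trace of a
separable extension is surjective). For `β = ∑_{i<n} i • σ^i θ`, shifting the summation index
gives `σ β = β - σ (Tr θ) = β - 1`, the boundary term `n • σ^n θ` vanishing because `n = 0` in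
`F`. Hence `β` is not fixed by `σ`, so `β ∉ F_q`, and `σ^k β = β - k`, which for `k = 1` and
`k = n - 1` reads `β ^ q = β - 1` and `β ^ q ^ (n - 1) = β + 1`.
-/

open Finset

theorem RingHom.map_sum_range_nsmul_iterate {R : Type*} [Ring R] (σ : R →+* R) {n : ℕ}
    (hn : (n : R) = 0) (θ : R) :
    σ (∑ i ∈ Finset.range n, i • σ^[i] θ) =
      ∑ i ∈ Finset.range n, i • σ^[i] θ - σ (∑ i ∈ Finset.range n, σ^[i] θ) := by
  rw [eq_sub_iff_add_eq, map_sum, map_sum, ← sum_add_distrib]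
  calc ∑ i ∈ Finset.range n, (σ (i • σ^[i] θ) + σ (σ^[i] θ))
      = ∑ i ∈ Finset.range n, (i + 1) • σ^[i + 1] θ := by
        refine sum_congr rfl fun i _ => ?_
        rw [map_nsmul, ← Function.iterate_succ_apply' σ, succ_nsmul]
    _ = ∑ i ∈ Finset.range (n + 1), i • σ^[i] θ := by rw [sum_range_succ', zero_smul, add_zero]
    _ = ∑ i ∈ Finset.range n, i • σ^[i] θ := by
        rw [sum_range_succ, nsmul_eq_mul, hn, zero_mul, add_zero]

theorem RingHom.iterate_apply_eq_sub_natCast {R : Type*} [Ring R] (σ : R →+* R) {b : R}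
    (hb : σ b = b - 1) (k : ℕ) : σ^[k] b = b - k := by
  induction k with
  | zero => simp
  | succ k ih =>
    rw [Function.iterate_succ_apply', ih, map_sub, hb, map_natCast, Nat.cast_succ]
    abel

theorem FiniteField.natCast_eq_zero_of_card_eq_pow {K : Type*} [Field K] [Fintype K] {p s : ℕ}
    (hs : s ≠ 0) (h : Fintype.card K = p ^ s) : (p : K) = 0 := by
  have := FiniteField.cast_card_eq_zero K
  rwa [h, Nat.cast_pow, pow_eq_zero_iff hs] at this

theorem stmt_0_general (p s n q : ℕ) (hs : 0 < s)
    (hq : q = p ^ s) (hn : 0 < n) (hpn : p ∣ n)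
    (Fq F : Type*) [Field Fq] [Field F] [Fintype Fq] [Fintype F] [Algebra Fq F]
    (hcardq : Fintype.card Fq = q) (hcardF : Fintype.card F = q ^ n) :
    ∃ β : F, β ∉ Set.range (algebraMap Fq F) ∧
      β ^ q + β ^ (q ^ (n - 1)) - 2 * β = 0 := by
  set σ : F →+* F := (FiniteField.frobeniusAlgHom Fq F).toRingHom
  have hσ (k : ℕ) (x : F) : σ^[k] x = x ^ q ^ k := by
    rw [← hcardq]; exact congrFun (pow_iterate _ k) x
  have hfinrank : Module.finrank Fq F = n := by
    refine Nat.pow_right_injective (hcardq ▸ Fintype.one_lt_card) ?_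
    simp only [← hcardF, hcardq, Module.card_eq_pow_finrank (K := Fq) (V := F)]
  have hnF : (n : F) = 0 := by
    obtain ⟨k, rfl⟩ := hpn
    rw [Nat.cast_mul, ← map_natCast (algebraMap Fq F),
      FiniteField.natCast_eq_zero_of_card_eq_pow hs.ne' (hcardq.trans hq), map_zero, zero_mul]
  obtain ⟨θ, hθ⟩ := Algebra.trace_surjective Fq F 1
  have htrace : ∑ i ∈ range n, σ^[i] θ = 1 := by
    simpa [hσ, hfinrank, hθ, hcardq] using (FiniteField.algebraMap_trace_eq_sum_pow Fq F θ).symm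
  set β := ∑ i ∈ range n, i • σ^[i] θ
  have hβ : σ β = β - 1 := by rw [σ.map_sum_range_nsmul_iterate hnF, htrace, map_one]
  refine ⟨β, ?_, ?_⟩
  · rintro ⟨a, ha⟩
    have : σ β = β := ha ▸ (FiniteField.frobeniusAlgHom Fq F).commutes a
    rw [hβ, sub_eq_self] at this
    exact one_ne_zero this
  · have hβq := σ.iterate_apply_eq_sub_natCast hβ 1
    have hβqn := σ.iterate_apply_eq_sub_natCast hβ (n - 1)
    rw [hσ, pow_one] at hβq
    rw [hσ, Nat.cast_sub hn, hnF] at hβqn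
    rw [hβq, hβqn]
    ring

theorem stmt_0 (p s n q : ℕ) (hp : p.Prime) (hodd : p ≠ 2) (hs : 0 < s)
    (hq : q = p ^ s) (hn : 0 < n) (hpn : p ∣ n)
    (Fq F : Type*) [Field Fq] [Field F] [Fintype Fq] [Fintype F] [Algebra Fq F]
    (hcardq : Fintype.card Fq = q) (hcardF : Fintype.card F = q ^ n) :
    ∃ β : F, β ∉ Set.range (algebraMap Fq F) ∧
      β ^ q + β ^ (q ^ (n - 1)) - 2 * β = 0 :=
  stmt_0_general p s n q hs hq hn hpn Fq F hcardq hcardF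
end

section
/- Let $q$ be a power of an odd prime $p$, $n \geq 2$, and let $\mathcal{P}$ be the $n \times n$ cyclic permutation matrix over $\mathbb{F}_q$ (with $\mathcal{P}_{j,j+1} = 1$ indices mod $n$). Set $M_{n,1} = \mathcal{P}^T - 2\,\mathrm{Id} + \mathcal{P}$. Then the rank of $M_{n,1}$ equals $n-1$ if $p \nmid n$, and equals $n-2$ if $p \mid n$. -/
/-!
Since `Pᵀ * P = 1`, the matrix `Pᵀ - 2 + P = Pᵀ * (P - 1) ^ 2` has the rank of `(P - 1) ^ 2`,
and `P - 1` acts on `v : ZMod n → K` as the forward difference `v (i + 1) - v i`.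
If `(P - 1) ^ 2` kills `v`, then `(P - 1) *ᵥ v` is a constant `c`; the differences of `v` sum to
zero around the cycle, so `n * c = 0`, and `v i = v 0 + i * c`. When `p ∤ n` this forces `c = 0`
and the kernel is the constants; when `p ∣ n` the cast `ZMod n → K` is a ring hom with constant
difference `1` and the kernel is two-dimensional.
-/

open Matrix Module

theorem FiniteField.charP_of_card_eq_prime_pow {K : Type*} [Field K] [Fintype K] {p s : ℕ}
    (hp : p.Prime) (hcard : Fintype.card K = p ^ s) : CharP K p := by
  obtain ⟨r, hr, m, hrp, hcard'⟩ := FiniteField.card' K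
  have : r ∣ p ^ s := hcard ▸ hcard' ▸ dvd_pow_self r m.ne_zero
  rwa [(Nat.prime_dvd_prime_iff_eq hrp hp).mp (hrp.dvd_of_dvd_pow this)] at hr

theorem Matrix.rank_add_finrank_ker_mulVecLin {m K : Type*} [Fintype m] [Field K]
    (A : Matrix m m K) : A.rank + finrank K (LinearMap.ker A.mulVecLin) = Fintype.card m := by
  rw [rank, LinearMap.finrank_range_add_finrank_ker, finrank_fintype_fun_eq_card]

namespace ZMod

variable {n : ℕ} [NeZero n]

theorem apply_eq_add_val_nsmul {M : Type*} [AddMonoid M] {f : ZMod n → M} {c : M}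
    (hf : ∀ i, f (i + 1) = f i + c) (i : ZMod n) : f i = f 0 + i.val • c := by
  suffices ∀ k : ℕ, f k = f 0 + k • c by simpa using this i.val
  intro k
  induction k with
  | zero => simp
  | succ k ih => rw [Nat.cast_succ, hf, ih, add_assoc, succ_nsmul]

theorem eq_const_of_apply_add_one {M : Type*} [AddMonoid M] {f : ZMod n → M}
    (hf : ∀ i, f (i + 1) = f i) (i : ZMod n) : f i = f 0 := by
  simpa using apply_eq_add_val_nsmul (f := f) (c := 0) (fun i => by rw [hf, add_zero]) i

theorem sum_apply_add_one_sub {G : Type*} [AddCommGroup G] (f : ZMod n → G) :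
    ∑ i, (f (i + 1) - f i) = 0 := by
  rw [Finset.sum_sub_distrib, sub_eq_zero]
  exact Fintype.sum_equiv (Equiv.addRight 1) _ _ fun _ => rfl

end ZMod

abbrev cyclicShift (K : Type*) [Zero K] [One K] (n : ℕ) : Matrix (ZMod n) (ZMod n) K :=
  (Equiv.addRight (1 : ZMod n)).permMatrix K

section

variable {K : Type*} {n : ℕ}

theorem cyclicShift_apply [Zero K] [One K] (i j : ZMod n) :
    cyclicShift K n i j = if j = i + 1 then 1 else 0 := by
  simp [PEquiv.toMatrix_apply, eq_comm]

variable [NeZero n]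

theorem transpose_cyclicShift_mul [NonAssocSemiring K] :
    (cyclicShift K n)ᵀ * cyclicShift K n = 1 := by
  rw [transpose_permMatrix, ← permMatrix_mul, mul_inv_cancel, permMatrix_one]

theorem transpose_cyclicShift_sub_two_add [Ring K] :
    (cyclicShift K n)ᵀ - 2 + cyclicShift K n =
      (cyclicShift K n)ᵀ * (cyclicShift K n - 1) ^ 2 := by
  set P := cyclicShift K n
  calc Pᵀ - 2 + P = Pᵀ * P * P - 2 * (Pᵀ * P) + Pᵀ := by
        rw [transpose_cyclicShift_mul, one_mul, mul_one]; abel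
    _ = Pᵀ * (P - 1) ^ 2 := by noncomm_ring

theorem cyclicShift_sub_one_mulVec [CommRing K] (v : ZMod n → K) (i : ZMod n) :
    ((cyclicShift K n - 1) *ᵥ v) i = v (i + 1) - v i := by
  simp [sub_mulVec, permMatrix_mulVec]

theorem cyclicShift_sub_one_mulVec_one [CommRing K] : (cyclicShift K n - 1) *ᵥ 1 = 0 := by
  ext i
  simp [cyclicShift_sub_one_mulVec]

theorem cyclicShift_sub_one_mulVec_castHom [CommRing K] {p : ℕ} [CharP K p] (h : p ∣ n) :
    (cyclicShift K n - 1) *ᵥ ZMod.castHom h K = 1 := by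
  ext i
  rw [cyclicShift_sub_one_mulVec, map_add, map_one, add_sub_cancel_left, Pi.one_apply]

theorem exists_eq_add_val_mul_of_sq_mulVec_eq_zero [CommRing K] {v : ZMod n → K}
    (hv : (cyclicShift K n - 1) ^ 2 *ᵥ v = 0) :
    ∃ c : K, (n : K) * c = 0 ∧ ∀ i, v i = v 0 + i.val * c := by
  set w := (cyclicShift K n - 1) *ᵥ v with hw
  have hw_step : ∀ i, w (i + 1) = w i := fun i => by
    have := congr_fun hv i
    rwa [sq, ← mulVec_mulVec, cyclicShift_sub_one_mulVec, Pi.zero_apply, sub_eq_zero] at this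
  have hw_const := ZMod.eq_const_of_apply_add_one hw_step
  refine ⟨w 0, ?_, fun i => ?_⟩
  · have hsum := ZMod.sum_apply_add_one_sub v
    simp_rw [← cyclicShift_sub_one_mulVec, ← hw, hw_const] at hsum
    simpa using hsum
  · have hv_step : ∀ i, v (i + 1) = v i + w 0 := fun i => by
      rw [← hw_const i, hw, cyclicShift_sub_one_mulVec, add_sub_cancel]
    simpa using ZMod.apply_eq_add_val_nsmul hv_step i

end

section

variable {K : Type*} [Field K] {n : ℕ}

theorem linearIndependent_one_castHom {p : ℕ} [CharP K p] (h : p ∣ n) :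
    LinearIndependent K ![(1 : ZMod n → K), ⇑(ZMod.castHom h K)] := by
  refine LinearIndependent.pair_iff.mpr fun a b hab => ?_
  have h0 := congr_fun hab 0
  have h1 := congr_fun hab 1
  simp only [Pi.add_apply, Pi.smul_apply, Pi.one_apply, map_zero, map_one, smul_eq_mul,
    Pi.zero_apply] at h0 h1
  exact ⟨by linear_combination h0, by linear_combination h1 - h0⟩

variable [NeZero n]

theorem mem_ker_cyclicShift_sub_one_sq {v : ZMod n → K} :
    v ∈ LinearMap.ker ((cyclicShift K n - 1) ^ 2).mulVecLin ↔
      (cyclicShift K n - 1) *ᵥ ((cyclicShift K n - 1) *ᵥ v) = 0 := by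
  rw [LinearMap.mem_ker, mulVecLin_apply, sq, mulVec_mulVec]

theorem ker_cyclicShift_sub_one_sq_of_natCast_ne_zero (hn : (n : K) ≠ 0) :
    LinearMap.ker ((cyclicShift K n - 1) ^ 2).mulVecLin = K ∙ 1 := by
  refine le_antisymm (fun v hv => ?_) ?_
  · obtain ⟨c, hc, hv⟩ := exists_eq_add_val_mul_of_sq_mulVec_eq_zero hv
    rw [(mul_eq_zero.mp hc).resolve_left hn] at hv
    exact Submodule.mem_span_singleton.mpr ⟨v 0, funext fun i => by simp [hv i]⟩
  · rw [Submodule.span_singleton_le_iff_mem, mem_ker_cyclicShift_sub_one_sq,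
      cyclicShift_sub_one_mulVec_one, mulVec_zero]

theorem ker_cyclicShift_sub_one_sq_of_dvd {p : ℕ} [CharP K p] (h : p ∣ n) :
    LinearMap.ker ((cyclicShift K n - 1) ^ 2).mulVecLin =
      Submodule.span K (Set.range ![1, ⇑(ZMod.castHom h K)]) := by
  refine le_antisymm (fun v hv => ?_) ?_
  · obtain ⟨c, -, hv⟩ := exists_eq_add_val_mul_of_sq_mulVec_eq_zero hv
    rw [Matrix.range_cons, Matrix.range_cons, Matrix.range_empty, Set.union_empty,
      Set.singleton_union, Submodule.mem_span_pair]
    refine ⟨v 0, c, funext fun i => ?_⟩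
    simp [hv i, ZMod.natCast_val, mul_comm]
  · rw [Submodule.span_le, Set.range_subset_iff, Fin.forall_fin_two]
    simp only [cons_val_zero, cons_val_one, SetLike.mem_coe, mem_ker_cyclicShift_sub_one_sq,
      cyclicShift_sub_one_mulVec_castHom h, cyclicShift_sub_one_mulVec_one, mulVec_zero]
    exact ⟨trivial, trivial⟩

theorem rank_transpose_cyclicShift_sub_two_add (p : ℕ) [CharP K p] :
    ((cyclicShift K n)ᵀ - 2 + cyclicShift K n).rank = if p ∣ n then n - 2 else n - 1 := by
  have hrank := rank_add_finrank_ker_mulVecLin ((cyclicShift K n - 1) ^ 2)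
  rw [transpose_cyclicShift_sub_two_add,
    rank_mul_eq_right_of_isUnit_det _ _ (isUnit_det_of_right_inverse transpose_cyclicShift_mul)]
  rw [ZMod.card] at hrank
  split_ifs with h
  · rw [ker_cyclicShift_sub_one_sq_of_dvd h,
      finrank_span_eq_card (linearIndependent_one_castHom h), Fintype.card_fin] at hrank
    omega
  · rw [ker_cyclicShift_sub_one_sq_of_natCast_ne_zero ((CharP.cast_eq_zero_iff K p n).not.mpr h),
      finrank_span_singleton one_ne_zero] at hrank
    omega

end

theorem stmt_6_general (p s n q : ℕ) (hp : p.Prime)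
    (hq : q = p ^ s) [NeZero n]
    (Fq : Type*) [Field Fq] [Fintype Fq] (hcardq : Fintype.card Fq = q)
    (P : Matrix (ZMod n) (ZMod n) Fq)
    (hP : ∀ i j : ZMod n, P i j = if j = i + 1 then 1 else 0) :
    (P.transpose - 2 + P).rank = if p ∣ n then n - 2 else n - 1 := by
  have : CharP Fq p := FiniteField.charP_of_card_eq_prime_pow hp (hcardq.trans hq)
  obtain rfl : P = cyclicShift Fq n := Matrix.ext fun i j => by rw [hP, cyclicShift_apply]
  exact rank_transpose_cyclicShift_sub_two_add p

theorem stmt_6 (p s n q : ℕ) (hp : p.Prime) (hodd : p ≠ 2) (hs : 0 < s)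
    (hq : q = p ^ s) (hn : 2 ≤ n) [NeZero n]
    (Fq : Type*) [Field Fq] [Fintype Fq] (hcardq : Fintype.card Fq = q)
    (P : Matrix (ZMod n) (ZMod n) Fq)
    (hP : ∀ i j : ZMod n, P i j = if j = i + 1 then 1 else 0) :
    (P.transpose - 2 + P).rank = if p ∣ n then n - 2 else n - 1 :=
  stmt_6_general p s n q hp hq Fq hcardq P hP
end

section
/- Let $q$ be a power of an odd prime, $n$ a positive integer, $\mathcal{B} = \{\beta_1, \dots, \beta_n\}$ a basis of $\mathbb{F}_{q^n}$ over $\mathbb{F}_q$, and let $G$ be the $n \times n$ matrix over $\mathbb{F}_q$ with entries $G_{jk} = \mathrm{Tr}_{\mathbb{F}_{q^n}/\mathbb{F}_q}(\beta_j \beta_k)$. Let $\chi$ be the quadratic character of $\mathbb{F}_q^*$. Then $\chi(\det G) = 1$ if $n$ is odd and $\chi(\det G) = -1$ if $n$ is even. -/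
/-!
Over `L = 𝔽_{q^n}` the trace is `Tr x = ∑ₖ φᵏ x` with `φ x = x ^ q`, so the Gram matrix factors as
`G = B Bᵀ` with `B` the Moore matrix `(φᵏ βᵢ)ᵢₖ`, and `det G = (det B)²`. Applying `φ` to `B`
rotates its columns cyclically, hence `φ (det B) = (-1)^(n-1) det B`. Since `det G ∈ 𝔽_q`, it is a
square there iff `det B ∈ 𝔽_q`, i.e. iff `φ` fixes `det B`; as `det B ≠ 0` and the characteristic
is odd, this happens iff `n` is odd.
-/

open Module Matrix Algebra

theorem isSquare_iff_mem_range_algebraMap_of_algebraMap_eq_sq {K L : Type*} [Field K] [Field L]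
    [Algebra K L] {a : K} {d : L} (hd : algebraMap K L a = d ^ 2) :
    IsSquare a ↔ d ∈ Set.range (algebraMap K L) := by
  constructor
  · rintro ⟨c, rfl⟩
    rw [map_mul, ← sq, sq_eq_sq_iff_eq_or_eq_neg] at hd
    rcases hd with hd | hd
    · exact ⟨c, hd⟩
    · exact ⟨-c, by rw [map_neg, hd, neg_neg]⟩
  · rintro ⟨c, rfl⟩
    exact ⟨c, (algebraMap K L).injective (by rw [hd, map_mul, sq])⟩

theorem pow_finRotate {M : Type*} [Monoid M] {g : M} {n : ℕ} (hg : orderOf g = n)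
    (i : Fin n) : g ^ (finRotate n i : ℕ) = g * g ^ (i : ℕ) := by
  subst hg
  have := i.neZero
  rw [finRotate_apply, Fin.val_add, Fin.val_one', Nat.add_mod_mod, pow_mod_orderOf, pow_succ']

namespace FiniteField

variable {K L : Type*} [Field K] [Fintype K] [Field L] [Algebra K L] [Finite L]

theorem mem_range_algebraMap_iff_frobenius_apply_eq {x : L} :
    x ∈ Set.range (algebraMap K L) ↔ frobeniusAlgEquivOfAlgebraic K L x = x := by
  rw [IsGalois.mem_range_algebraMap_iff_fixed]
  refine ⟨fun h ↦ h (frobeniusAlgEquivOfAlgebraic K L), fun h f ↦ ?_⟩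
  obtain ⟨i, rfl⟩ := (bijective_frobeniusAlgEquivOfAlgebraic_pow K L).2 f
  rw [AlgEquiv.coe_pow]
  exact Function.iterate_fixed h _

theorem algebraMap_trace_eq_sum_frobenius_pow (x : L) :
    algebraMap K L (Algebra.trace K L x) =
      ∑ k : Fin (finrank K L), (frobeniusAlgEquivOfAlgebraic K L ^ (k : ℕ)) x := by
  rw [trace_eq_sum_automorphisms]
  exact (Fintype.sum_bijective _ (bijective_frobeniusAlgEquivOfAlgebraic_pow K L) _ _
    fun _ ↦ rfl).symm

variable (K) in
noncomputable def mooreMatrix {ι : Type*} (b : ι → L) : Matrix ι (Fin (finrank K L)) L :=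
  of fun i k ↦ (frobeniusAlgEquivOfAlgebraic K L ^ (k : ℕ)) (b i)

theorem traceMatrix_map_algebraMap {ι : Type*} (b : ι → L) :
    (traceMatrix K b).map (algebraMap K L) = mooreMatrix K b * (mooreMatrix K b)ᵀ := by
  ext i j
  simp only [map_apply, traceMatrix_apply, traceForm_apply, algebraMap_trace_eq_sum_frobenius_pow,
    mul_apply, transpose_apply, mooreMatrix, of_apply, map_mul]

theorem algebraMap_discr (b : Fin (finrank K L) → L) :
    algebraMap K L (discr K b) = (mooreMatrix K b).det ^ 2 := by
  rw [discr_def, RingHom.map_det, RingHom.mapMatrix_apply, traceMatrix_map_algebraMap, det_mul,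
    det_transpose, sq]

theorem frobenius_det_mooreMatrix (b : Fin (finrank K L) → L) :
    frobeniusAlgEquivOfAlgebraic K L (mooreMatrix K b).det =
      (-1) ^ (finrank K L - 1) * (mooreMatrix K b).det := by
  have hB : (frobeniusAlgEquivOfAlgebraic K L).mapMatrix (mooreMatrix K b) =
      (mooreMatrix K b).submatrix id (finRotate _) := by
    ext i k
    simp only [mooreMatrix, AlgEquiv.mapMatrix_apply, map_apply, submatrix_apply, of_apply, id_eq,
      pow_finRotate (orderOf_frobeniusAlgEquivOfAlgebraic K L), AlgEquiv.mul_apply]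
  rw [AlgEquiv.map_det, hB, det_permute', sign_finRotate]
  push_cast
  rfl

theorem quadraticChar_discr [DecidableEq K] (hK : ringChar K ≠ 2) {ι : Type*} [Fintype ι]
    [DecidableEq ι] (b : Basis ι K L) :
    quadraticChar K (discr K b) = if Odd (finrank K L) then 1 else -1 := by
  let e : ι ≃ Fin (finrank K L) := Fintype.equivFinOfCardEq (finrank_eq_card_basis b).symm
  set d := (mooreMatrix K (b ∘ e.symm)).det
  have hd : algebraMap K L (discr K b) = d ^ 2 := by rw [← discr_reindex K b e, algebraMap_discr]
  have hb : discr K b ≠ 0 := discr_not_zero_of_basis K b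
  have hsq : IsSquare (discr K b) ↔ frobeniusAlgEquivOfAlgebraic K L d = d :=
    (isSquare_iff_mem_range_algebraMap_of_algebraMap_eq_sq hd).trans
      mem_range_algebraMap_iff_frobenius_apply_eq
  split_ifs with hn
  · refine (quadraticChar_one_iff_isSquare hb).mpr (hsq.mpr ?_)
    rw [frobenius_det_mooreMatrix, (Nat.Odd.sub_odd hn odd_one).neg_one_pow, one_mul]
  · have hn' : Odd (finrank K L - 1) :=
      Nat.Even.sub_odd finrank_pos (Nat.not_odd_iff_even.mp hn) odd_one
    have hd0 : d ≠ 0 := fun h ↦ hb (by simpa [h] using hd)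
    rw [quadraticChar_neg_one_iff_not_isSquare, hsq, frobenius_det_mooreMatrix, hn'.neg_one_pow,
      neg_one_mul, Ring.eq_self_iff_eq_zero_of_char_ne_two (Algebra.ringChar_eq K L ▸ hK)]
    exact hd0

end FiniteField

theorem stmt_8_general (p s n q : ℕ) (hp : p.Prime) (hodd : p ≠ 2)
    (hq : q = p ^ s)
    (Fq F : Type*) [Field Fq] [Field F] [Fintype Fq] [DecidableEq Fq] [Algebra Fq F]
    (hcardq : Fintype.card Fq = q)
    (b : Module.Basis (Fin n) Fq F)
    (G : Matrix (Fin n) (Fin n) Fq)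
    (hG : ∀ j k : Fin n, G j k = Algebra.trace Fq F (b j * b k)) :
    quadraticChar Fq G.det = if Odd n then 1 else -1 := by
  have : Module.Finite Fq F := .of_basis b
  have : Finite F := Module.finite_of_finite Fq
  have hchar : ringChar Fq ≠ 2 := by
    rw [Ne, FiniteField.even_card_iff_char_two, hcardq, hq, ← Nat.even_iff, Nat.not_even_iff_odd]
    exact (hp.odd_of_ne_two hodd).pow
  have hGb : G = traceMatrix Fq b := Matrix.ext hG
  rw [hGb, ← discr_def, FiniteField.quadraticChar_discr hchar b, finrank_eq_card_basis b,
    Fintype.card_fin]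

theorem stmt_8 (p s n q : ℕ) (hp : p.Prime) (hodd : p ≠ 2) (hs : 0 < s)
    (hq : q = p ^ s) (hn : 0 < n)
    (Fq F : Type*) [Field Fq] [Field F] [Fintype Fq] [DecidableEq Fq] [Algebra Fq F]
    (hcardq : Fintype.card Fq = q) (hrank : Module.finrank Fq F = n)
    (b : Module.Basis (Fin n) Fq F)
    (G : Matrix (Fin n) (Fin n) Fq)
    (hG : ∀ j k : Fin n, G j k = Algebra.trace Fq F (b j * b k)) :
    quadraticChar Fq G.det = if Odd n then 1 else -1 :=
  stmt_8_general p s n q hp hodd hq Fq F hcardq b G hG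
end

section
/- Let $n$ be even and $i = n/2$, and let $q$ be a power of an odd prime. The $n \times n$ matrix $M_{n,i} = (\mathcal{P}^i)^T - 2\,\mathrm{Id} + \mathcal{P}^i$ over $\mathbb{F}_q$ (where $\mathcal{P}$ is the cyclic shift matrix) has rank $n/2$, and it is congruent to the block matrix $\begin{pmatrix} -2\,\mathrm{Id}_{n/2} & 0 \\ 0 & 0 \end{pmatrix}$. -/
open Matrix Finset

private lemma sum_one_ite' {α R : Type*} [Fintype α] [DecidableEq α] [CommRing R]
    (a : α) (c : R) (g : α → R) :
    ∑ x, (if x = a then c else 0) * g x = c * g a := by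
  simp [ite_mul, Finset.sum_ite_eq']

private lemma sum_two_ite' {α R : Type*} [Fintype α] [DecidableEq α] [CommRing R]
    (a b : α) (hab : a ≠ b) (c d : R) (g : α → R) :
    ∑ x, (if x = a then c else if x = b then d else 0) * g x = c * g a + d * g b := by
  have h : ∀ x, (if x = a then c else if x = b then d else 0) * g x
      = (if x = a then c * g a else 0) + (if x = b then d * g b else 0) := by
    intro x
    by_cases h1 : x = a <;> by_cases h2 : x = b <;> simp_all
  simp [h, Finset.sum_add_distrib, Finset.sum_ite_eq']

theorem stmt_10 (p s n i q : ℕ) (hp : p.Prime) (hodd : p ≠ 2) (hs : 0 < s)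
    (hq : q = p ^ s) [NeZero n] (hni : n = 2 * i) (hi : 0 < i)
    (Fq : Type*) [Field Fq] [Fintype Fq] (hcardq : Fintype.card Fq = q)
    (P : Matrix (ZMod n) (ZMod n) Fq)
    (hP : ∀ j k : ZMod n, P j k = if k = j + 1 then 1 else 0) :
    ((P ^ i).transpose - 2 + P ^ i).rank = n / 2 ∧
    ∃ M : Matrix (ZMod n) (ZMod n) Fq, IsUnit M.det ∧
      M * ((P ^ i).transpose - 2 + P ^ i) * M.transpose =
        Matrix.diagonal (fun j : ZMod n => if (j.val : ℕ) < n / 2 then (-2 : Fq) else 0) := by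
  -- characteristic facts
  have h2 : (2 : Fq) ≠ 0 := by
    intro h
    haveI := ringChar.charP Fq
    have hdvd : ringChar Fq ∣ 2 :=
      (CharP.cast_eq_zero_iff Fq (ringChar Fq) 2).mp (by exact_mod_cast h)
    have hrp : (ringChar Fq).Prime := CharP.char_is_prime Fq _
    have hr2 : ringChar Fq = 2 := (Nat.prime_dvd_prime_iff_eq hrp Nat.prime_two).mp hdvd
    obtain ⟨m, -, hcard⟩ := FiniteField.card Fq (ringChar Fq)
    rw [hr2, hcardq, hq] at hcard
    have hps : p ∣ 2 ^ (m : ℕ) := hcard ▸ dvd_pow_self p hs.ne'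
    exact hodd ((Nat.prime_dvd_prime_iff_eq hp Nat.prime_two).mp (hp.prime.dvd_of_dvd_pow hps))
  have hn2 : n / 2 = i := by omega
  have hiln : i < n := by omega
  -- entries of powers of P
  have hPi : ∀ m : ℕ, ∀ j k : ZMod n, (P ^ m) j k = if k = j + (m : ZMod n) then 1 else 0 := by
    intro m
    induction m with
    | zero => intro j k; simp [Matrix.one_apply, eq_comm]
    | succ m ih =>
      intro j k
      rw [pow_succ, Matrix.mul_apply]
      simp only [ih, hP, ite_mul, one_mul, zero_mul]
      rw [Finset.sum_ite_eq' Finset.univ (j + (m : ZMod n))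
        (fun l => if k = l + 1 then (1 : Fq) else 0)]
      simp [add_assoc]
  -- ZMod facts
  have hiv : (i : ZMod n).val = i := by rw [ZMod.val_natCast]; exact Nat.mod_eq_of_lt hiln
  have hii : (i : ZMod n) + i = 0 := by
    have h0 : ((2 * i : ℕ) : ZMod n) = 0 := by rw [← hni]; exact ZMod.natCast_self n
    push_cast at h0
    linear_combination h0
  have hi0 : (i : ZMod n) ≠ 0 := by
    intro h
    rw [ZMod.natCast_eq_zero_iff] at h
    exact absurd (Nat.le_of_dvd hi h) (by omega)
  have hcastval : ∀ j : ZMod n, ((j.val : ℕ) : ZMod n) = j := fun j => ZMod.natCast_rightInverse j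
  have hvaddlt : ∀ j : ZMod n, j.val < i → (j + (i : ZMod n)).val = j.val + i := by
    intro j hj
    rw [ZMod.val_add, hiv, Nat.mod_eq_of_lt (by omega)]
  have hvsub : ∀ j : ZMod n, i ≤ j.val → (j - (i : ZMod n)).val = j.val - i := by
    intro j hj
    have h1 : j - (i : ZMod n) = ((j.val - i : ℕ) : ZMod n) := by
      rw [Nat.cast_sub hj, hcastval]
    rw [h1, ZMod.val_natCast, Nat.mod_eq_of_lt (by have := j.val_lt; omega)]
  have hsubadd : ∀ j : ZMod n, j - (i : ZMod n) + i = j := fun j => by ring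
  have haddsub : ∀ j : ZMod n, j + (i : ZMod n) = j - i := fun j => by linear_combination hii
  have hne_add : ∀ j : ZMod n, j ≠ j + i := by
    intro j h
    exact hi0 (by linear_combination h.symm)
  have hne_sub : ∀ j : ZMod n, j ≠ j - i := by
    intro j h
    exact hi0 (by linear_combination -h.symm)
  -- the matrix A
  set A : Matrix (ZMod n) (ZMod n) Fq := (P ^ i).transpose - 2 + P ^ i with hAdef
  have hA : ∀ j k : ZMod n, A j k = if k = j then -2 else if k = j + i then 2 else 0 := by
    intro j k
    have h2m : (2 : Matrix (ZMod n) (ZMod n) Fq) j k = if j = k then 2 else 0 := by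
      have h21 : (2 : Matrix (ZMod n) (ZMod n) Fq) = 1 + 1 := by norm_num
      rw [h21, Matrix.add_apply, Matrix.one_apply]
      split <;> norm_num
    have hAe : A j k = (P ^ i) k j - (2 : Matrix (ZMod n) (ZMod n) Fq) j k + (P ^ i) j k := by
      rw [hAdef]
      simp only [Matrix.add_apply, Matrix.sub_apply, Matrix.transpose_apply]
    rw [hAe, hPi, hPi, h2m]
    have hiff : j = k + i ↔ k = j + i := by
      constructor <;> intro h
      · rw [h, add_assoc, hii, add_zero]
      · rw [h, add_assoc, hii, add_zero]
    by_cases hkj : k = j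
    · subst hkj
      simp only [if_pos rfl, if_neg (hne_add k)]
      norm_num
    · by_cases hki : k = j + i
      · have h3 : j = k + i := hiff.mpr hki
        simp only [if_pos h3, if_pos hki, if_neg (fun h : j = k => hkj h.symm), if_neg hkj]
        norm_num
      · have h3 : ¬ j = k + i := fun h => hki (hiff.mp h)
        simp only [if_neg h3, if_neg hki, if_neg (fun h : j = k => hkj h.symm), if_neg hkj]
        norm_num
  -- the congruence matrix M and its inverse N
  set M : Matrix (ZMod n) (ZMod n) Fq :=
    Matrix.of (fun j k => if k = j then 1 else if i ≤ j.val ∧ k = j - i then 1 else 0) with hMdef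
  set N : Matrix (ZMod n) (ZMod n) Fq :=
    Matrix.of (fun j k => if k = j then 1 else if i ≤ j.val ∧ k = j - i then -1 else 0) with hNdef
  have hMapp : ∀ j k : ZMod n,
      M j k = if k = j then 1 else if i ≤ j.val ∧ k = j - i then 1 else 0 := fun j k => rfl
  have hNapp : ∀ j k : ZMod n,
      N j k = if k = j then 1 else if i ≤ j.val ∧ k = j - i then -1 else 0 := fun j k => rfl
  -- M * N = 1
  have hMN : M * N = 1 := by
    ext j k
    rw [Matrix.mul_apply]
    by_cases hj : i ≤ j.val
    · have hrow : ∀ b, M j b = if b = j then 1 else if b = j - i then 1 else 0 := by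
        intro b; rw [hMapp]; simp [hj]
      simp only [hrow]
      rw [sum_two_ite' j (j - i) (hne_sub j) 1 1 (fun b => N b k)]
      have hvs : ¬ (i ≤ (j - (i:ZMod n)).val) := by
        rw [hvsub j hj]; have := j.val_lt; omega
      rw [hNapp, hNapp]
      simp only [hvs, false_and, if_false]
      rw [Matrix.one_apply]
      by_cases hkj : k = j
      · subst hkj
        rw [if_pos rfl, if_neg (fun h => hne_sub k h), if_pos rfl]
        norm_num
      · by_cases hks : k = j - i
        · rw [if_neg hkj, if_pos (⟨hj, hks⟩ : i ≤ j.val ∧ k = j - (i:ZMod n)), if_pos hks,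
            if_neg (fun h : j = k => hkj h.symm)]
          norm_num
        · rw [if_neg hkj, if_neg (fun h : i ≤ j.val ∧ k = j - (i:ZMod n) => hks h.2),
            if_neg hks, if_neg (fun h : j = k => hkj h.symm)]
          norm_num
    · have hrow : ∀ b, M j b = if b = j then 1 else 0 := by
        intro b; rw [hMapp]; simp [hj]
      simp only [hrow]
      rw [sum_one_ite' j 1 (fun b => N b k), hNapp]
      simp [Matrix.one_apply, hj, eq_comm]
  have hMdet : IsUnit M.det := Matrix.isUnit_det_of_right_inverse hMN
  -- C = M * A
  have hC : ∀ j k : ZMod n, (M * A) j k =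
      if i ≤ j.val then 0 else if k = j then -2 else if k = j + i then 2 else 0 := by
    intro j k
    rw [Matrix.mul_apply]
    by_cases hj : i ≤ j.val
    · have hrow : ∀ b, M j b = if b = j then 1 else if b = j - i then 1 else 0 := by
        intro b; rw [hMapp]; simp [hj]
      simp only [hrow]
      rw [sum_two_ite' j (j - i) (hne_sub j) 1 1 (fun b => A b k), hA, hA]
      rw [if_pos hj, hsubadd j]
      by_cases hkj : k = j
      · rw [if_pos hkj, if_neg (fun h : k = j - (i:ZMod n) => hne_sub j (hkj ▸ h)), if_pos hkj]
        norm_num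
      · by_cases hks : k = j - i
        · have hka : k = j + i := by rw [haddsub]; exact hks
          rw [if_neg hkj, if_pos hka, if_pos hks]
          norm_num
        · have hka : ¬ k = j + i := by rw [haddsub]; exact hks
          rw [if_neg hkj, if_neg hka, if_neg hks, if_neg hkj]
          norm_num
    · have hrow : ∀ b, M j b = if b = j then 1 else 0 := by
        intro b; rw [hMapp]; simp [hj]
      simp only [hrow]
      rw [sum_one_ite' j 1 (fun b => A b k), hA, if_neg hj]
      ring_nf
  -- the diagonal identity
  have hD : M * A * M.transpose =
      Matrix.diagonal (fun j : ZMod n => if (j.val : ℕ) < n / 2 then (-2 : Fq) else 0) := by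
    ext j k
    rw [Matrix.mul_apply]
    simp only [Matrix.transpose_apply, hC]
    rw [Matrix.diagonal_apply, hn2]
    by_cases hj : i ≤ j.val
    · simp only [if_pos hj, zero_mul, Finset.sum_const_zero]
      rw [eq_comm]
      split
      · rw [if_neg (by omega)]
      · rfl
    · have hrow : ∀ b, (if i ≤ j.val then (0:Fq) else if b = j then -2 else if b = j + i then 2 else 0)
          = if b = j then -2 else if b = j + i then 2 else 0 := by
        intro b; rw [if_neg hj]
      simp only [hrow]
      rw [sum_two_ite' j (j + i) (hne_add j) (-2) 2 (fun b => M k b), hMapp, hMapp]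
      have hjlt : j.val < i := by omega
      by_cases hkj : k = j
      · subst hkj
        have hkv : ¬ i ≤ k.val := by omega
        rw [if_pos rfl, if_pos rfl, if_pos hjlt,
          if_neg (fun h : k + (i:ZMod n) = k => hne_add k h.symm),
          if_neg (fun h : i ≤ k.val ∧ k + (i:ZMod n) = k - i => hkv h.1)]
        norm_num
      · by_cases hka : k = j + i
        · have hkv : i ≤ k.val := by rw [hka, hvaddlt j hjlt]; omega
          have hjk : j = k - i := by rw [hka, add_sub_cancel_right]
          rw [if_neg (fun h : j = k => hkj h.symm),
            if_pos (⟨hkv, hjk⟩ : i ≤ k.val ∧ j = k - (i:ZMod n)), if_pos hka.symm,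
            if_neg (fun h : j = k => hkj h.symm)]
          norm_num
        · have hjk : ¬ j = k - (i:ZMod n) := fun h => hka (by rw [h, hsubadd])
          have h4 : ¬ (j + (i:ZMod n) = k - i) := by
            intro h
            apply hkj
            have h5 : k = j + (i:ZMod n) + i := by rw [h, hsubadd]
            rw [add_assoc, hii, add_zero] at h5
            exact h5
          rw [if_neg (fun h : j = k => hkj h.symm),
            if_neg (fun h : i ≤ k.val ∧ j = k - (i:ZMod n) => hjk h.2),
            if_neg (fun h : j + (i:ZMod n) = k => hka h.symm),
            if_neg (fun h : i ≤ k.val ∧ j + (i:ZMod n) = k - i => h4 h.2),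
            if_neg (fun h : j = k => hkj h.symm)]
          norm_num
  refine ⟨?_, M, hMdet, hD⟩
  -- rank computation
  haveI : DecidableEq Fq := Classical.decEq Fq
  have hr1 : (M * A * M.transpose).rank = A.rank := by
    rw [Matrix.rank_mul_eq_left_of_isUnit_det M.transpose (M * A)
        (by rwa [Matrix.det_transpose]),
      Matrix.rank_mul_eq_right_of_isUnit_det M A hMdet]
  rw [← hr1, hD, Matrix.rank_diagonal]
  have h2n : (-2 : Fq) ≠ 0 := neg_ne_zero.mpr h2
  have he : ∀ j : ZMod n,
      ((if (j.val : ℕ) < n / 2 then (-2 : Fq) else 0) ≠ 0) ↔ j.val < n / 2 := by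
    intro j
    by_cases hjv : j.val < n / 2 <;> simp [hjv, h2n]
  rw [Fintype.card_congr (Equiv.subtypeEquivRight he)]
  have e : {j : ZMod n // j.val < n / 2} ≃ Fin (n / 2) :=
    { toFun := fun j => ⟨j.1.val, j.2⟩
      invFun := fun m => ⟨((m : ℕ) : ZMod n), by
        rw [ZMod.val_natCast, Nat.mod_eq_of_lt (by have := m.2; omega)]
        exact m.2⟩
      left_inv := fun j => by
        ext
        exact hcastval j.1
      right_inv := fun m => by
        ext
        simp [ZMod.val_natCast, Nat.mod_eq_of_lt (show (m:ℕ) < n by have := m.2; omega)] }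
  rw [Fintype.card_congr e, Fintype.card_fin]
end

section
/- Let $q$ be a power of an odd prime $p$, let $0 < i < n$, $d = \gcd(i,n)$, $l = n/d$, and assume $n \neq 2i$. Let $M_{n,i} = (\mathcal{P}^i)^T - 2\,\mathrm{Id} + \mathcal{P}^i$ over $\mathbb{F}_q$. Then $\mathrm{rank}(M_{n,i}) = n - d$ if $p \nmid l$, and $\mathrm{rank}(M_{n,i}) = n - 2d$ if $p \mid l$. -/
/-!
Left multiplication by the invertible matrix `(Pⁱ)ᵀ` turns `M` into `((Pⁱ)ᵀ - 1)²`, and `Pᵀ` is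
the matrix of multiplication by `x` on `Fq[X]/(Xⁿ - 1)` in the basis `1, x, …, xⁿ⁻¹`. So `rank M`
is the rank of multiplication by `(Xⁱ - 1)²` on `Fq[X]/(Xⁿ - 1)`, namely `n - deg gcd`.
Write `Xⁱ - 1 = e A` and `Xⁿ - 1 = e B` with `e = X^d - 1`; then `A` and `B` are coprime since
`gcd (Xⁱ - 1) (Xⁿ - 1) = X^d - 1`, and `B = 1 + X^d + ⋯ + X^(d(l-1)) ≡ l` modulo `e`.
Hence the gcd is `e` if `p ∤ l` and `e²` if `p ∣ l`.
-/

open Polynomial Module Matrix Finset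

theorem dvd_X_pow_gcd_sub_one {R : Type*} [CommRing R] {δ : R[X]} {i n : ℕ}
    (hi : δ ∣ X ^ i - 1) (hn : δ ∣ X ^ n - 1) : δ ∣ X ^ i.gcd n - 1 := by
  have hdvd_iff : ∀ k, δ ∣ X ^ k - 1 ↔ AdjoinRoot.root δ ^ k = 1 := fun k => by
    rw [← AdjoinRoot.mk_X, ← map_pow, ← map_one (AdjoinRoot.mk δ), AdjoinRoot.mk_eq_mk]
  rw [hdvd_iff] at hi hn ⊢
  exact pow_gcd_eq_one.mpr ⟨hi, hn⟩

theorem sub_one_dvd_geom_sum_sub_natCast {R : Type*} [CommRing R] (x : R) (l : ℕ) :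
    x - 1 ∣ ∑ k ∈ range l, x ^ k - l := by
  have h : ∑ k ∈ range l, x ^ k - l = ∑ k ∈ range l, (x ^ k - 1) := by
    simp [Finset.sum_sub_distrib]
  rw [h]
  exact Finset.dvd_sum fun k _ => by simpa using sub_dvd_pow_sub_pow x 1 k

theorem X_pow_sub_one_eq_mul_geom_sum {R : Type*} [CommRing R] {d m : ℕ} (h : d ∣ m) :
    (X ^ m - 1 : R[X]) = (X ^ d - 1) * ∑ k ∈ range (m / d), (X ^ d) ^ k := by
  rw [mul_geom_sum, ← pow_mul, Nat.mul_div_cancel' h]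

theorem X_pow_sub_one_ne_zero {R : Type*} [Ring R] [Nontrivial R] {n : ℕ} (hn : 0 < n) :
    (X ^ n - 1 : R[X]) ≠ 0 := by
  simpa using X_pow_sub_C_ne_zero hn (1 : R)

theorem natDegree_X_pow_sub_one {R : Type*} [Ring R] [Nontrivial R] (n : ℕ) :
    (X ^ n - 1 : R[X]).natDegree = n := by
  simpa using natDegree_X_pow_sub_C (n := n) (r := (1 : R))

section Field
variable {K : Type*} [Field K]

theorem finrank_range_lmul_mk_mul_of_isCoprime {e g h : K[X]} (he : e ≠ 0)
    (hgh : IsCoprime g h) :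
    finrank K (LinearMap.range
      (Algebra.lmul K (AdjoinRoot (e * h)) (AdjoinRoot.mk (e * h) (e * g)))) = h.natDegree := by
  -- `θ f = e g f mod e h`; its kernel is `(h)` because `g` is coprime to `h`.
  set θ : K[X] →ₗ[K] AdjoinRoot (e * h) :=
    Algebra.lmul K _ (AdjoinRoot.mk (e * h) (e * g)) ∘ₗ (AdjoinRoot.mkₐ (e * h)).toLinearMap
  have hrange : LinearMap.range θ = LinearMap.range
      (Algebra.lmul K (AdjoinRoot (e * h)) (AdjoinRoot.mk (e * h) (e * g))) :=
    LinearMap.range_comp_of_range_eq_top _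
      (LinearMap.range_eq_top.mpr (AdjoinRoot.mk_surjective))
  have hker : LinearMap.ker θ = (Ideal.span {h}).restrictScalars K := by
    ext f
    simp only [θ, LinearMap.mem_ker, LinearMap.coe_comp, Function.comp_apply,
      AlgHom.toLinearMap_apply, AdjoinRoot.coe_mkₐ, Algebra.coe_lmul_eq_mul,
      LinearMap.mul_apply', ← map_mul, AdjoinRoot.mk_eq_zero, Submodule.restrictScalars_mem,
      Ideal.mem_span_singleton, mul_assoc, mul_dvd_mul_iff_left he]
    exact ⟨hgh.symm.dvd_of_dvd_mul_left, fun hf => hf.mul_left g⟩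
  rw [← hrange, ← θ.quotKerEquivRange.finrank_eq, hker,
    (Submodule.Quotient.restrictScalarsEquiv K _).finrank_eq, finrank_quotient_span_eq_natDegree]

theorem isCoprime_geom_sum_X_pow_gcd {i n : ℕ} (hn : 0 < n) :
    IsCoprime (∑ k ∈ range (i / i.gcd n), (X ^ i.gcd n : K[X]) ^ k)
      (∑ k ∈ range (n / i.gcd n), (X ^ i.gcd n : K[X]) ^ k) := by
  set d := i.gcd n
  have he : (X ^ d - 1 : K[X]) ≠ 0 := X_pow_sub_one_ne_zero (Nat.gcd_pos_of_pos_right i hn)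
  refine IsRelPrime.isCoprime fun γ hγi hγn => ?_
  have h : (X ^ d - 1) * γ ∣ X ^ d - 1 := by
    apply dvd_X_pow_gcd_sub_one
    · rw [X_pow_sub_one_eq_mul_geom_sum (Nat.gcd_dvd_left i n)]; exact mul_dvd_mul_left _ hγi
    · rw [X_pow_sub_one_eq_mul_geom_sum (Nat.gcd_dvd_right i n)]; exact mul_dvd_mul_left _ hγn
  exact isUnit_of_dvd_one ((mul_dvd_mul_iff_left he).mp (by simpa using h))

theorem finrank_range_lmul_mk_mul_sq (p : ℕ) [CharP K p] {e A B : K[X]} {l : ℕ} (he : e ≠ 0)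
    (hB : B ≠ 0) (hAB : IsCoprime A B) (hBl : e ∣ B - l) :
    finrank K (LinearMap.range (Algebra.lmul K (AdjoinRoot (e * B))
      (AdjoinRoot.mk _ ((e * A) ^ 2)))) =
      if p ∣ l then B.natDegree - e.natDegree else B.natDegree := by
  split_ifs with hl
  · obtain ⟨B', rfl⟩ : e ∣ B := by simpa [(CharP.cast_eq_zero_iff K[X] p l).mpr hl] using hBl
    rw [show (e * A) ^ 2 = e * e * A ^ 2 by ring, ← mul_assoc,
      finrank_range_lmul_mk_mul_of_isCoprime (mul_ne_zero he he) (hAB.of_mul_right_right).pow_left,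
      natDegree_mul he (right_ne_zero_of_mul hB)]
    omega
  · obtain ⟨Q, hQ⟩ := hBl
    have heB : IsCoprime e B := by
      have hunit : IsUnit (l : K[X]) := by
        rw [← C_eq_natCast, isUnit_C, isUnit_iff_ne_zero, Ne, CharP.cast_eq_zero_iff K p]
        exact hl
      rw [sub_eq_iff_eq_add'.mp hQ]
      exact (isCoprime_one_right.of_isCoprime_of_dvd_right
        (isUnit_iff_dvd_one.mp hunit)).add_mul_left_right Q
    rw [show (e * A) ^ 2 = e * (e * A ^ 2) by ring,
      finrank_range_lmul_mk_mul_of_isCoprime he (heB.mul_left hAB.pow_left)]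

theorem finrank_range_lmul_mk_X_pow_sub_one_sq (p : ℕ) [CharP K p] {i n : ℕ} (hn : 0 < n) :
    finrank K (LinearMap.range (Algebra.lmul K (AdjoinRoot (X ^ n - 1 : K[X]))
      (AdjoinRoot.mk _ ((X ^ i - 1) ^ 2)))) =
      if p ∣ n / i.gcd n then n - 2 * i.gcd n else n - i.gcd n := by
  have he : (X ^ i.gcd n - 1 : K[X]) ≠ 0 := X_pow_sub_one_ne_zero (Nat.gcd_pos_of_pos_right i hn)
  have hnd := natDegree_X_pow_sub_one (R := K) n
  have hA := X_pow_sub_one_eq_mul_geom_sum (R := K) (Nat.gcd_dvd_left i n)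
  have hB := X_pow_sub_one_eq_mul_geom_sum (R := K) (Nat.gcd_dvd_right i n)
  have hB0 := right_ne_zero_of_mul (hB ▸ X_pow_sub_one_ne_zero (R := K) hn)
  rw [hB, natDegree_mul he hB0, natDegree_X_pow_sub_one] at hnd
  rw [hA, hB, finrank_range_lmul_mk_mul_sq p he hB0 (isCoprime_geom_sum_X_pow_gcd hn)
    (sub_one_dvd_geom_sum_sub_natCast _ _), natDegree_X_pow_sub_one]
  split_ifs <;> omega

theorem rank_aeval_toMatrix_lmul_root {ι : Type*} [Fintype ι] [DecidableEq ι] {f : K[X]}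
    (b : Basis ι K (AdjoinRoot f)) (G : K[X]) :
    (aeval (LinearMap.toMatrix b b (Algebra.lmul K _ (AdjoinRoot.root f))) G).rank =
      finrank K (LinearMap.range (Algebra.lmul K _ (AdjoinRoot.mk f G))) := by
  change (aeval (LinearMap.toMatrixAlgEquiv b (Algebra.lmul K _ (AdjoinRoot.root f))) G).rank = _
  rw [aeval_algHom_apply, aeval_algHom_apply, AdjoinRoot.aeval_eq,
    rank_eq_finrank_range_toLin _ b b]
  exact congrArg (fun φ => finrank K (LinearMap.range φ)) (toLin_toMatrix b b _)

theorem rank_transpose_sub_two_add {ι : Type*} [Fintype ι] [DecidableEq ι] {Q : Matrix ι ι K}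
    (hQ : Qᵀ * Q = 1) : (Qᵀ - 2 + Q).rank = ((Qᵀ - 1) ^ 2).rank := by
  rw [← rank_mul_eq_right_of_isUnit_det Qᵀ _ (isUnit_det_of_right_inverse hQ), mul_add, mul_sub, hQ]
  noncomm_ring

end Field

section Cyclic
variable (K : Type*) [Field K] (n : ℕ) [NeZero n]

noncomputable def cyclicBasis : Basis (ZMod n) K (AdjoinRoot (X ^ n - 1 : K[X])) :=
  (AdjoinRoot.powerBasis (X_pow_sub_one_ne_zero (NeZero.pos n))).basis.reindex
    ((finCongr (by rw [AdjoinRoot.powerBasis_dim, natDegree_X_pow_sub_one])).trans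
      (ZMod.finEquiv n).toEquiv)

variable {K n}

theorem cyclicBasis_apply (k : ZMod n) : cyclicBasis K n k = AdjoinRoot.root _ ^ k.val := by
  obtain ⟨m, rfl⟩ : ∃ m, n = m + 1 := Nat.exists_eq_succ_of_ne_zero (NeZero.ne n)
  simp only [cyclicBasis, ZMod.finEquiv, RingEquiv.toEquiv_eq_coe, Basis.coe_reindex,
    PowerBasis.coe_basis, AdjoinRoot.powerBasis_gen, Function.comp_apply]
  rfl

theorem root_mul_cyclicBasis (k : ZMod n) :
    AdjoinRoot.root _ * cyclicBasis K n k = cyclicBasis K n (k + 1) := by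
  have hroot : AdjoinRoot.root (X ^ n - 1 : K[X]) ^ n = 1 := by
    have h := AdjoinRoot.mk_self (f := (X ^ n - 1 : K[X]))
    rwa [map_sub, map_pow, AdjoinRoot.mk_X, map_one, sub_eq_zero] at h
  rw [cyclicBasis_apply, cyclicBasis_apply, ← pow_succ']
  exact pow_eq_pow_of_modEq ((ZMod.natCast_eq_natCast_iff _ _ _).mp (by simp)) hroot

theorem toMatrix_cyclicBasis_lmul_root :
    LinearMap.toMatrix (cyclicBasis K n) (cyclicBasis K n)
      (Algebra.lmul K _ (AdjoinRoot.root _)) = ((Equiv.addRight 1).permMatrix K)ᵀ := by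
  ext z w
  simp [LinearMap.toMatrix_apply, root_mul_cyclicBasis, Finsupp.single_apply, PEquiv.toMatrix_apply]

end Cyclic

theorem stmt_13_general (p s n i d l q : ℕ) (hp : p.Prime) (hq : q = p ^ s) (hd : d = Nat.gcd i n)
    (hl : l = n / d) [NeZero n]
    (Fq : Type*) [Field Fq] [Fintype Fq] (hcardq : Fintype.card Fq = q)
    (P : Matrix (ZMod n) (ZMod n) Fq)
    (hP : ∀ z w : ZMod n, P z w = if w = z + 1 then 1 else 0) :
    ((P ^ i).transpose - 2 + P ^ i).rank = if p ∣ l then n - 2 * d else n - d := by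
  have : Fact p.Prime := ⟨hp⟩
  have : CharP Fq p := charP_of_card_eq_prime_pow (hcardq.trans hq)
  have hPσ : P = (Equiv.addRight 1).permMatrix Fq := by
    ext z w
    simp [hP, PEquiv.toMatrix_apply, eq_comm]
  have horth : (P ^ i)ᵀ * P ^ i = 1 := by
    rw [transpose_pow]
    refine pow_mul_pow_eq_one i ?_
    rw [hPσ, transpose_permMatrix, ← permMatrix_mul, mul_inv_cancel, permMatrix_one]
  have hpoly : ((P ^ i)ᵀ - 1) ^ 2 =
      aeval (LinearMap.toMatrix (cyclicBasis Fq n) (cyclicBasis Fq n)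
        (Algebra.lmul Fq _ (AdjoinRoot.root _))) ((X ^ i - 1) ^ 2 : Fq[X]) := by
    rw [toMatrix_cyclicBasis_lmul_root, ← hPσ, transpose_pow]
    simp
  rw [rank_transpose_sub_two_add horth, hpoly, rank_aeval_toMatrix_lmul_root,
    finrank_range_lmul_mk_X_pow_sub_one_sq p (NeZero.pos n), hl, hd]

theorem stmt_13 (p s n i d l q : ℕ) (hp : p.Prime) (hodd : p ≠ 2) (hs : 0 < s)
    (hq : q = p ^ s) (hi : 0 < i) (hin : i < n) (hd : d = Nat.gcd i n) (hl : l = n / d)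
    (hn2i : n ≠ 2 * i) [NeZero n]
    (Fq : Type*) [Field Fq] [Fintype Fq] (hcardq : Fintype.card Fq = q)
    (P : Matrix (ZMod n) (ZMod n) Fq)
    (hP : ∀ z w : ZMod n, P z w = if w = z + 1 then 1 else 0) :
    ((P ^ i).transpose - 2 + P ^ i).rank = if p ∣ l then n - 2 * d else n - d :=
  stmt_13_general p s n i d l q hp hq hd hl Fq hcardq P hP
end
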